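/- The nuclear norm of Y ∈ ℝ^{n×m} satisfies the SDP characterization: ‖Y‖_* equals the minimum of (1/2)(trace(W₁) + trace(W₂)) over symmetric W₁ ∈ ℝ^{m×m}, W₂ ∈ ℝ^{n×n} such that the block matrix [[W₁, Yᵀ],[Y, W₂]] is positive semidefinite. -/

import Mathlib

open Matrix BigOperators

/-! With `V` an orthonormal eigenbasis of `YᵀY`, the columns of `W = Y V` are orthogonal with
squared norms `σ i ^ 2`, `σ i = √λᵢ`. Hence `U = W diag(σ)⁻¹` (using `0⁻¹ = 0`) is a partial
isometry and `Y = U diag(σ) Vᵀ` is a singular value decomposition.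

The block matrix for `W₁ = V diag(σ) Vᵀ`, `W₂ = U diag(σ) Uᵀ` is the Gram matrix
`[V; U] diag(σ) [V; U]ᵀ`, of half trace `∑ σ i`. Conversely, compressing a feasible block matrix
by `[V; -U]` gives `2 tr(UᵀYV) ≤ tr(VᵀW₁V) + tr(UᵀW₂U) ≤ tr W₁ + tr W₂`, the last step because
`UUᵀ` is an orthogonal projection, while `UᵀYV = diag(σ)`. -/

namespace Matrix

variable {k m n : Type*} [Fintype k] [Fintype m] [Fintype n]

lemma trace_mul_nonneg_of_isStarProjection {C P : Matrix n n ℝ} (hC : C.PosSemidef)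
    (hP : IsStarProjection P) : 0 ≤ (C * P).trace := by
  have hPt : Pᴴ = P := hP.isSelfAdjoint.star_eq
  calc 0 ≤ (Pᴴ * C * P).trace := (hC.conjTranspose_mul_mul_same P).trace_nonneg
    _ = (C * P).trace := by
      rw [hPt, mul_assoc, trace_mul_comm, mul_assoc, hP.isIdempotentElem.eq]

lemma isStarProjection_mul_transpose_of_mul_transpose_mul_self {U : Matrix n k ℝ}
    (hU : U * Uᵀ * U = U) : IsStarProjection (U * Uᵀ) where
  isIdempotentElem := by rw [IsIdempotentElem, ← Matrix.mul_assoc, hU]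
  isSelfAdjoint := by
    rw [IsSelfAdjoint, star_eq_conjTranspose, conjTranspose_eq_transpose_of_trivial,
      transpose_mul, transpose_transpose]

lemma trace_transpose_mul_mul_le_of_mul_transpose_mul_self [DecidableEq n] {C : Matrix n n ℝ}
    {U : Matrix n k ℝ} (hC : C.PosSemidef) (hU : U * Uᵀ * U = U) :
    (Uᵀ * C * U).trace ≤ C.trace := by
  have h := trace_mul_nonneg_of_isStarProjection hC
    (isStarProjection_mul_transpose_of_mul_transpose_mul_self hU).one_sub
  rw [mul_sub, mul_one, trace_sub] at h
  have hcycle : (Uᵀ * C * U).trace = (C * (U * Uᵀ)).trace := by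
    rw [trace_mul_cycle, trace_mul_comm]
  linarith

lemma two_mul_trace_le_of_fromBlocks_posSemidef {A : Matrix m m ℝ} {B : Matrix n m ℝ}
    {C : Matrix n n ℝ} (h : (fromBlocks A Bᵀ B C).PosSemidef) (P : Matrix m k ℝ)
    (Q : Matrix n k ℝ) :
    2 * (Qᵀ * B * P).trace ≤ (Pᵀ * A * P).trace + (Qᵀ * C * Q).trace := by
  have hconj : (fromRows P (-Q))ᴴ * fromBlocks A Bᵀ B C * fromRows P (-Q)
      = Pᵀ * A * P - Qᵀ * B * P - (Qᵀ * B * P)ᵀ + Qᵀ * C * Q := by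
    rw [conjTranspose_eq_transpose_of_trivial, transpose_fromRows, fromCols_mul_fromBlocks,
      fromCols_mul_fromRows]
    simp only [transpose_mul, transpose_neg, transpose_transpose, Matrix.add_mul, Matrix.neg_mul,
      Matrix.mul_neg, Matrix.mul_assoc]
    abel
  have := (h.conjTranspose_mul_mul_same (fromRows P (-Q))).trace_nonneg
  rw [hconj, trace_add, trace_sub, trace_sub, trace_transpose] at this
  linarith

lemma posSemidef_fromBlocks_mul_mul_transpose {D : Matrix k k ℝ} (hD : D.PosSemidef)
    (V : Matrix m k ℝ) (U : Matrix n k ℝ) :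
    (fromBlocks (V * D * Vᵀ) (V * D * Uᵀ) (U * D * Vᵀ) (U * D * Uᵀ)).PosSemidef := by
  have h := hD.mul_mul_conjTranspose_same (fromRows V U)
  rwa [conjTranspose_eq_transpose_of_trivial, transpose_fromRows, fromRows_mul,
    fromRows_mul_fromCols] at h

variable [DecidableEq m]

theorem isLeast_half_trace_of_svd [DecidableEq n] {Y U : Matrix n m ℝ} {V : Matrix m m ℝ}
    {σ : m → ℝ} (hσ : 0 ≤ σ) (hV : V ∈ orthogonalGroup m ℝ) (hU : U * Uᵀ * U = U)
    (hUσ : Uᵀ * U * diagonal σ = diagonal σ) (hY : Y = U * diagonal σ * Vᵀ) :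
    IsLeast {t : ℝ | ∃ (W₁ : Matrix m m ℝ) (W₂ : Matrix n n ℝ), W₁.IsSymm ∧ W₂.IsSymm ∧
        (fromBlocks W₁ Yᵀ Y W₂).PosSemidef ∧ t = (W₁.trace + W₂.trace) / 2}
      (∑ i, σ i) := by
  have hVtV : Vᵀ * V = 1 := (mem_orthogonalGroup_iff' m ℝ).mp hV
  have hVVt : V * Vᵀ = 1 := (mem_orthogonalGroup_iff m ℝ).mp hV
  have hYt : Yᵀ = V * diagonal σ * Uᵀ := by
    simp [hY, transpose_mul, Matrix.mul_assoc]
  have hUYV : Uᵀ * Y * V = diagonal σ := by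
    rw [hY, ← Matrix.mul_assoc, ← Matrix.mul_assoc, hUσ, Matrix.mul_assoc, hVtV,
      Matrix.mul_one]
  constructor
  · refine ⟨V * diagonal σ * Vᵀ, U * diagonal σ * Uᵀ, ?_, ?_, ?_, ?_⟩
    · simp [IsSymm, transpose_mul, Matrix.mul_assoc]
    · simp [IsSymm, transpose_mul, Matrix.mul_assoc]
    · rw [hYt, hY]
      exact posSemidef_fromBlocks_mul_mul_transpose (posSemidef_diagonal_iff.mpr hσ) V U
    · rw [trace_mul_cycle, hVtV, Matrix.one_mul, trace_mul_cycle, hUσ, trace_diagonal]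
      ring
  · rintro t ⟨W₁, W₂, -, -, hW, rfl⟩
    have hW₂ : W₂.PosSemidef := hW.submatrix Sum.inr
    have hblock := two_mul_trace_le_of_fromBlocks_posSemidef hW V U
    rw [hUYV, trace_diagonal, trace_mul_cycle, hVVt, Matrix.one_mul] at hblock
    have hW₂U := trace_transpose_mul_mul_le_of_mul_transpose_mul_self hW₂ hU
    linarith

section ColumnOrthogonal

variable {W : Matrix n m ℝ} {σ : m → ℝ}

lemma mul_diagonal_inv_mul_diagonal_of_transpose_mul_self
    (hW : Wᵀ * W = diagonal fun i => σ i ^ 2) :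
    (W * diagonal fun i => (σ i)⁻¹) * diagonal σ = W := by
  -- `W * diagonal c` has Gram matrix `diagonal (c * σ ^ 2 * c) = 0`, so it vanishes.
  set c : m → ℝ := fun i => (σ i)⁻¹ * σ i - 1
  have hcσ : ∀ i, c i * σ i = 0 := fun i => by
    rcases eq_or_ne (σ i) 0 with h | h <;> simp [c, h]
  have hZ : (W * diagonal c)ᴴ * (W * diagonal c) = 0 := by
    rw [conjTranspose_eq_transpose_of_trivial, transpose_mul, diagonal_transpose,
      Matrix.mul_assoc, ← Matrix.mul_assoc Wᵀ, hW, diagonal_mul_diagonal, diagonal_mul_diagonal,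
      ← diagonal_zero]
    congr 1
    funext i
    linear_combination (σ i * c i) * hcσ i
  have hWc : W * diagonal c = 0 := conjTranspose_mul_self_eq_zero.mp hZ
  have he : (diagonal fun i => (σ i)⁻¹ * σ i) = diagonal c + 1 := by
    rw [← diagonal_one, diagonal_add]
    congr 1
    funext i
    simp [c]
  rw [Matrix.mul_assoc, diagonal_mul_diagonal, he, Matrix.mul_add, hWc, zero_add, Matrix.mul_one]

lemma transpose_mul_self_mul_diagonal_inv (hW : Wᵀ * W = diagonal fun i => σ i ^ 2) :
    (W * diagonal fun i => (σ i)⁻¹)ᵀ * (W * diagonal fun i => (σ i)⁻¹) =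
      diagonal fun i => (σ i)⁻¹ * σ i := by
  rw [transpose_mul, diagonal_transpose, Matrix.mul_assoc, ← Matrix.mul_assoc Wᵀ, hW,
    diagonal_mul_diagonal, diagonal_mul_diagonal]
  congr 1
  funext i
  rcases eq_or_ne (σ i) 0 with h | h
  · simp [h]
  · field_simp

lemma exists_partialIsometry_of_transpose_mul_self_eq_diagonal
    (hW : Wᵀ * W = diagonal fun i => σ i ^ 2) :
    ∃ U : Matrix n m ℝ, U * Uᵀ * U = U ∧ Uᵀ * U * diagonal σ = diagonal σ ∧
      U * diagonal σ = W := by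
  refine ⟨W * diagonal fun i => (σ i)⁻¹, ?_, ?_,
    mul_diagonal_inv_mul_diagonal_of_transpose_mul_self hW⟩
  · rw [Matrix.mul_assoc, transpose_mul_self_mul_diagonal_inv hW, Matrix.mul_assoc,
      diagonal_mul_diagonal]
    congr 2
    funext i
    rcases eq_or_ne (σ i) 0 with h | h <;> simp [h]
  · rw [transpose_mul_self_mul_diagonal_inv hW, diagonal_mul_diagonal]
    congr 1
    funext i
    rcases eq_or_ne (σ i) 0 with h | h <;> simp [h]

end ColumnOrthogonal

lemma transpose_mul_self_mul_eigenvectorUnitary (Y : Matrix n m ℝ) (hY : (Yᵀ * Y).IsHermitian) :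
    (Y * (hY.eigenvectorUnitary : Matrix m m ℝ))ᵀ * (Y * (hY.eigenvectorUnitary : Matrix m m ℝ)) =
      diagonal fun i => √(hY.eigenvalues i) ^ 2 := by
  have h := hY.conjStarAlgAut_star_eigenvectorUnitary
  simp only [Unitary.conjStarAlgAut_apply, Unitary.coe_star, star_star] at h
  have hnonneg : ∀ i, 0 ≤ hY.eigenvalues i :=
    (posSemidef_conjTranspose_mul_self Y).eigenvalues_nonneg
  simp_rw [Real.sq_sqrt (hnonneg _), transpose_mul, Matrix.mul_assoc, ← Matrix.mul_assoc Yᵀ]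
  simpa [star_eq_conjTranspose, conjTranspose_eq_transpose_of_trivial, Matrix.mul_assoc] using h

end Matrix

theorem nuclear_norm_sdp_characterization_general
    (n m : ℕ)
    (Y : Matrix (Fin n) (Fin m) ℝ)
    (hY : (Yᵀ * Y).IsHermitian) :
    IsLeast
      {t : ℝ | ∃ (W₁ : Matrix (Fin m) (Fin m) ℝ) (W₂ : Matrix (Fin n) (Fin n) ℝ),
        W₁.IsSymm ∧ W₂.IsSymm ∧ (Matrix.fromBlocks W₁ Yᵀ Y W₂).PosSemidef ∧
        t = (W₁.trace + W₂.trace) / 2}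
      (∑ i, Real.sqrt (hY.eigenvalues i)) := by
  set V : Matrix (Fin m) (Fin m) ℝ := (hY.eigenvectorUnitary : Matrix (Fin m) (Fin m) ℝ)
  have hV : V ∈ orthogonalGroup (Fin m) ℝ := hY.eigenvectorUnitary.2
  obtain ⟨U, hU, hUσ, hUV⟩ :=
    exists_partialIsometry_of_transpose_mul_self_eq_diagonal
      (transpose_mul_self_mul_eigenvectorUnitary Y hY)
  refine isLeast_half_trace_of_svd (fun i => Real.sqrt_nonneg _) hV hU hUσ ?_
  rw [hUV, Matrix.mul_assoc, (mem_orthogonalGroup_iff _ ℝ).mp hV, Matrix.mul_one]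

/-- SDP characterization of the nuclear norm: `‖Y‖_*` (the sum of the singular values of
`Y`, i.e. of the square roots of the eigenvalues of `YᵀY`) is the minimum of
`(1/2)(tr W₁ + tr W₂)` over symmetric `W₁, W₂` making `[[W₁, Yᵀ],[Y, W₂]]` positive
semidefinite; the minimum is attained. -/
theorem nuclear_norm_sdp_characterization
    (n m : ℕ) (hn : 0 < n) (hm : 0 < m)
    (Y : Matrix (Fin n) (Fin m) ℝ)
    (hY : (Yᵀ * Y).IsHermitian) :
    IsLeast
      {t : ℝ | ∃ (W₁ : Matrix (Fin m) (Fin m) ℝ) (W₂ : Matrix (Fin n) (Fin n) ℝ),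
        W₁.IsSymm ∧ W₂.IsSymm ∧ (Matrix.fromBlocks W₁ Yᵀ Y W₂).PosSemidef ∧
        t = (W₁.trace + W₂.trace) / 2}
      (∑ i, Real.sqrt (hY.eigenvalues i)) :=
  nuclear_norm_sdp_characterization_general n m Y hY
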